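/- Let G be a countable discrete group acting partially on a compact Hausdorff space X via θ = ({X_t}, {h_t}). If every X_t is clopen in X, then the envelope space X^e = (G × X)/∼, with the quotient topology, is Hausdorff. -/
import Mathlib


/-- A partial action of a group `G` on a set `X`. -/
structure PartialAction (G : Type*) [Group G] (X : Type*) where
  dom : G → Set X
  h : G → X → X
  dom_one : dom 1 = Set.univ
  h_one : ∀ x, h 1 x = x
  bijOn : ∀ t, Set.BijOn (h t) (dom t⁻¹) (dom t)
  image_inter : ∀ t s, h t '' (dom t⁻¹ ∩ dom s) = dom t ∩ dom (t * s)
  hcomp : ∀ t s x, x ∈ dom s⁻¹ ∩ dom (s⁻¹ * t⁻¹) → h t (h s x) = h (t * s) x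

/-- A topological partial action: the domains are open and each `h t` is a homeomorphism
of `X_{t⁻¹}` onto `X_t` (continuity of the inverse is `continuousOn t⁻¹`). -/
structure TopPartialAction (G : Type*) [Group G] (X : Type*) [TopologicalSpace X]
    extends PartialAction G X where
  isOpen_dom : ∀ t, IsOpen (dom t)
  continuousOn : ∀ t, ContinuousOn (h t) (dom t⁻¹)

/-- The relation `(r,x) ∼ (s,y) ↔ x ∈ X_{r⁻¹s} ∧ h_{s⁻¹r}(x) = y`. -/
def PartialAction.rel {G X : Type*} [Group G] (θ : PartialAction G X) :
    G × X → G × X → Prop :=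
  fun p q => p.2 ∈ θ.dom (p.1⁻¹ * q.1) ∧ θ.h (q.1⁻¹ * p.1) p.2 = q.2

/-- Separation lemma: non-related points can be separated by open sets in `G × X`
no two of whose points are related. -/
theorem rel_separation {G X : Type*} [Group G]
    [TopologicalSpace G] [DiscreteTopology G]
    [TopologicalSpace X] [T2Space X]
    (θ : TopPartialAction G X)
    (hclopen : ∀ t : G, IsClopen (θ.dom t))
    (p q : G × X) (hnr : ¬ θ.toPartialAction.rel p q) :
    ∃ U V : Set (G × X), IsOpen U ∧ IsOpen V ∧ p ∈ U ∧ q ∈ V ∧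
      ∀ u ∈ U, ∀ v ∈ V, ¬ θ.toPartialAction.rel u v := by
  obtain ⟨r, x⟩ := p
  obtain ⟨s, y⟩ := q
  by_cases hx : x ∈ θ.dom (r⁻¹ * s)
  · -- then h (s⁻¹ r) x ≠ y
    have hz : θ.h (s⁻¹ * r) x ≠ y := by
      intro hzy; exact hnr ⟨hx, hzy⟩
    obtain ⟨W₁, W₂, hW₁, hW₂, hzW₁, hyW₂, hdisj⟩ := t2_separation hz
    have hdominv : ((s⁻¹ * r)⁻¹ : G) = r⁻¹ * s := by group
    have hcont : ContinuousOn (θ.h (s⁻¹ * r)) (θ.dom (r⁻¹ * s)) := by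
      have := θ.continuousOn (s⁻¹ * r); rwa [hdominv] at this
    have hV0 : IsOpen (θ.dom (r⁻¹ * s) ∩ θ.h (s⁻¹ * r) ⁻¹' W₁) :=
      hcont.isOpen_inter_preimage (θ.isOpen_dom _) hW₁
    refine ⟨({r} : Set G) ×ˢ (θ.dom (r⁻¹ * s) ∩ θ.h (s⁻¹ * r) ⁻¹' W₁),
      ({s} : Set G) ×ˢ W₂, (isOpen_discrete _).prod hV0,
      (isOpen_discrete _).prod hW₂, ⟨rfl, hx, hzW₁⟩, ⟨rfl, hyW₂⟩, ?_⟩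
    rintro ⟨r', x'⟩ ⟨hr', -, hx'W⟩ ⟨s', y'⟩ ⟨hs', hy'⟩ ⟨-, hrel2⟩
    simp only [Set.mem_singleton_iff] at hr' hs'
    subst hr'; subst hs'
    apply Set.disjoint_left.mp hdisj hx'W
    rw [hrel2] at *
    exact hy'
  · -- x not in the domain
    refine ⟨({r} : Set G) ×ˢ (θ.dom (r⁻¹ * s))ᶜ, ({s} : Set G) ×ˢ Set.univ,
      (isOpen_discrete _).prod (hclopen _).isClosed.isOpen_compl,
      (isOpen_discrete _).prod isOpen_univ, ⟨rfl, hx⟩, ⟨rfl, trivial⟩, ?_⟩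
    rintro ⟨r', x'⟩ ⟨hr', hx'⟩ ⟨s', y'⟩ ⟨hs', -⟩ ⟨hrel1, -⟩
    simp only [Set.mem_singleton_iff] at hr' hs'
    subst hr'; subst hs'
    exact hx' hrel1

/-- The saturation of an open set is open. -/
theorem rel_saturation_isOpen {G X : Type*} [Group G]
    [TopologicalSpace G] [DiscreteTopology G] [TopologicalSpace X]
    (θ : TopPartialAction G X) (heq : Equivalence θ.toPartialAction.rel)
    (U : Set (G × X)) (hU : IsOpen U) :
    IsOpen {q | ∃ p ∈ U, θ.toPartialAction.rel p q} := by
  rw [isOpen_iff_forall_mem_open]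
  rintro ⟨s, y⟩ ⟨⟨r, x⟩, hpU, hx, hh⟩
  -- by symmetry, y ∈ dom (s⁻¹ r) and h (r⁻¹ s) y = x
  obtain ⟨hy, hhy⟩ := heq.symm ⟨hx, hh⟩
  have hdominv : ((r⁻¹ * s)⁻¹ : G) = s⁻¹ * r := by group
  have hcont : ContinuousOn (θ.h (r⁻¹ * s)) (θ.dom (s⁻¹ * r)) := by
    have := θ.continuousOn (r⁻¹ * s); rwa [hdominv] at this
  have hUx : IsOpen {x' : X | (r, x') ∈ U} :=
    hU.preimage (Continuous.prodMk_right r)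
  have hV0 : IsOpen (θ.dom (s⁻¹ * r) ∩ θ.h (r⁻¹ * s) ⁻¹' {x' | (r, x') ∈ U}) :=
    hcont.isOpen_inter_preimage (θ.isOpen_dom _) hUx
  refine ⟨({s} : Set G) ×ˢ (θ.dom (s⁻¹ * r) ∩ θ.h (r⁻¹ * s) ⁻¹' {x' | (r, x') ∈ U}),
    fun q' hq' => ?_, (isOpen_discrete _).prod hV0, ⟨rfl, hy, ?_⟩⟩
  · obtain ⟨s', y'⟩ := q'
    obtain ⟨hs', hy', hy'U⟩ := hq'
    rw [Set.mem_singleton_iff] at hs'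
    cases hs'
    exact ⟨(r, θ.h (r⁻¹ * s') y'), hy'U, heq.symm ⟨hy', rfl⟩⟩
  · show (r, θ.h (r⁻¹ * s) y) ∈ U
    have hxy : θ.h (r⁻¹ * s) y = x := hhy
    rw [hxy]; exact hpU

/-- If a partial action of a countable discrete group `G` on a compact Hausdorff space `X`
has all its domains `X_t` clopen, then the envelope space `X^e = (G × X)/∼`, with the
quotient topology, is Hausdorff. -/
theorem t2_envelope_of_isClopen_dom {G X : Type*} [Group G] [Countable G]
    [TopologicalSpace G] [DiscreteTopology G]
    [TopologicalSpace X] [CompactSpace X] [T2Space X]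
    (θ : TopPartialAction G X) (heq : Equivalence θ.toPartialAction.rel)
    (hclopen : ∀ t : G, IsClopen (θ.dom t)) :
    T2Space (Quotient (Setoid.mk θ.toPartialAction.rel heq)) := by
  set st := Setoid.mk θ.toPartialAction.rel heq with hst
  constructor
  intro a b hab
  induction a using Quotient.inductionOn with | h p =>
  induction b using Quotient.inductionOn with | h q =>
  have hnr : ¬ θ.toPartialAction.rel p q := fun h => hab (Quotient.sound h)
  obtain ⟨U, V, hUo, hVo, hpU, hqV, hsep⟩ := rel_separation θ hclopen p q hnr
  refine ⟨Quotient.mk st '' U, Quotient.mk st '' V, ?_, ?_,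
    ⟨p, hpU, rfl⟩, ⟨q, hqV, rfl⟩, ?_⟩
  · rw [isOpen_coinduced (f := Quotient.mk st)]
    convert rel_saturation_isOpen θ heq U hUo using 1
    ext q'
    simp only [Set.mem_preimage, Set.mem_image, Set.mem_setOf_eq]
    constructor
    · rintro ⟨p', hp', hmk⟩
      exact ⟨p', hp', Quotient.exact hmk⟩
    · rintro ⟨p', hp', hrel⟩
      exact ⟨p', hp', Quotient.sound hrel⟩
  · rw [isOpen_coinduced (f := Quotient.mk st)]
    convert rel_saturation_isOpen θ heq V hVo using 1
    ext q'
    simp only [Set.mem_preimage, Set.mem_image, Set.mem_setOf_eq]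
    constructor
    · rintro ⟨p', hp', hmk⟩
      exact ⟨p', hp', Quotient.exact hmk⟩
    · rintro ⟨p', hp', hrel⟩
      exact ⟨p', hp', Quotient.sound hrel⟩
  · rw [Set.disjoint_left]
    rintro c ⟨u, huU, hcu⟩ ⟨v, hvV, hcv⟩
    exact hsep u huU v hvV (Quotient.exact (hcu.trans hcv.symm))
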